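/- arXiv:2006.00191 — 2 statements merged into one kernel-verified Lean document; each statement's English description precedes it below -/
import Mathlib

section
/- Let w₂ ∈ ℂ be nonzero, θ ∈ (0, π/2), Φ := θ − arg(w₂), a ∈ ℝ, φ ∈ (0,1), and let k_R, k_I ≥ 2 with thresholds q_{R,1} < ⋯ < q_{R,k_R−1} and q_{I,1} < ⋯ < q_{I,k_I−1}. For b ∈ ℝ, let I₂(b) be the binary-input mutual information of the (k_R,k_I)-point receiver with gain w₂ and inputs x₁ = a·e^{iΦ} (probability φ) and x₂ = b·e^{iΦ} (probability 1−φ). Then I₂(b) converges, as b → ∞, to f_φ(p₂) where p₂ = Q(q_{R,k_R−1} − |w₂|·a·cos θ)·Q(q_{I,k_I−1} − |w₂|·a·sin θ). -/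
/-! As `b → ∞` both coordinates of `w₂ · b e^{iΦ}` tend to `+∞`, so the output law of `x₂`
converges to the point mass at the top cell `(k_R, k_I)`. The mutual information is continuous in
that law, and against a point mass it collapses, via `η(xy) = x η(y) + y η(x)`, to `f_φ(p)` with
`p` the probability of the top cell under `x₁`. -/

open MeasureTheory Real Filter

/-- The standard Gaussian tail function `Q(x) = ∫_x^∞ (2π)^{-1/2} e^{-u²/2} du`. -/
noncomputable def gaussQ (x : ℝ) : ℝ :=
  ∫ u in Set.Ioi x, (Real.sqrt (2 * Real.pi))⁻¹ * Real.exp (-u ^ 2 / 2)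

/-- `η(t) = -t log t` (with `η(0) = 0`, automatic since `Real.log 0 = 0`). -/
noncomputable def eta (t : ℝ) : ℝ := -t * Real.log t

/-- The binary entropy function `h(p) = -p log p - (1-p) log (1-p)`. -/
noncomputable def binEnt (p : ℝ) : ℝ := eta p + eta (1 - p)

/-- Boundary-extended Gaussian tail for a `k`-point ADC with thresholds `q`. -/
noncomputable def Qb (k : ℕ) (q : ℕ → ℝ) (t : ℝ) (l : ℕ) : ℝ :=
  if l = 0 then 1 else if l = k then 0 else gaussQ (q l - t)

/-- `p_l(t) = Q(q_{l-1} - t) - Q(q_l - t)` for the `k`-point ADC. -/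
noncomputable def adcP (k : ℕ) (q : ℕ → ℝ) (t : ℝ) (l : ℕ) : ℝ :=
  Qb k q t (l - 1) - Qb k q t l

/-- Sign value of a Boolean: `true ↦ +1`, `false ↦ -1`. -/
noncomputable def sgnb (b : Bool) : ℝ := if b then 1 else -1

/-- Transition probability of the complex Gaussian channel with gain `w` followed by
per-component one-bit ADCs: `P((s_R,s_I)|x) = Q(-s_R·Re(wx))·Q(-s_I·Im(wx))`. -/
noncomputable def p1bitC (w x : ℂ) (s : Bool × Bool) : ℝ :=
  gaussQ (-(sgnb s.1) * (w * x).re) * gaussQ (-(sgnb s.2) * (w * x).im)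

/-- Binary-input mutual information of the complex Gaussian channel with gain `w`
followed by per-component one-bit ADCs, input `x₁` w.p. `φ` and `x₂` w.p. `1-φ`. -/
noncomputable def miOneBitC (w : ℂ) (φ : ℝ) (x₁ x₂ : ℂ) : ℝ :=
  ∑ s : Bool × Bool,
    (eta (φ * p1bitC w x₁ s + (1 - φ) * p1bitC w x₂ s)
      - φ * eta (p1bitC w x₁ s) - (1 - φ) * eta (p1bitC w x₂ s))

/-- Transition probability of the complex Gaussian channel with gain `w` followed by a
`(k_R, k_I)`-point per-component receiver with thresholds `qR`, `qI`:
`P((i,l)|x) = p_{R,i}(Re(wx)) · p_{I,l}(Im(wx))`. -/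
noncomputable def pADCC (w : ℂ) (kR kI : ℕ) (qR qI : ℕ → ℝ) (x : ℂ) (y : ℕ × ℕ) : ℝ :=
  adcP kR qR ((w * x).re) y.1 * adcP kI qI ((w * x).im) y.2

/-- Binary-input mutual information of the complex Gaussian channel with gain `w`
followed by a `(k_R, k_I)`-point per-component receiver, input `x₁` w.p. `φ` and
`x₂` w.p. `1-φ`. -/
noncomputable def miADCC (w : ℂ) (kR kI : ℕ) (qR qI : ℕ → ℝ) (φ : ℝ) (x₁ x₂ : ℂ) : ℝ :=
  ∑ y ∈ Finset.Icc 1 kR ×ˢ Finset.Icc 1 kI,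
    (eta (φ * pADCC w kR kI qR qI x₁ y + (1 - φ) * pADCC w kR kI qR qI x₂ y)
      - φ * eta (pADCC w kR kI qR qI x₁ y) - (1 - φ) * eta (pADCC w kR kI qR qI x₂ y))

/-- `f_φ(p) = h(φ(1-p)) - φ·h(p)`. -/
noncomputable def fphi (φ p : ℝ) : ℝ := binEnt (φ * (1 - p)) - φ * binEnt p

open ProbabilityTheory Finset

lemma gaussQ_eq_setIntegral_gaussianPDFReal (x : ℝ) :
    gaussQ x = ∫ u in Set.Ioi x, gaussianPDFReal 0 1 u := by
  simp [gaussQ, gaussianPDFReal]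

lemma tendsto_gaussQ_atBot : Tendsto gaussQ atBot (nhds 1) := by
  have hcover : (⋃ x : ℝ, Set.Ioi (-x)) = Set.univ :=
    Set.eq_univ_of_forall fun u => Set.mem_iUnion.2 ⟨1 - u, by simp⟩
  have hmono : Monotone fun x : ℝ => Set.Ioi (-x) := fun _ _ hxy =>
    Set.Ioi_subset_Ioi (neg_le_neg hxy)
  have key := tendsto_setIntegral_of_monotone (μ := volume) (f := gaussianPDFReal 0 1)
    (fun _ => measurableSet_Ioi) hmono
    (by rw [hcover]; exact (integrable_gaussianPDFReal 0 1).integrableOn)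
  rw [hcover, Measure.restrict_univ, integral_gaussianPDFReal_eq_one 0 one_ne_zero] at key
  simpa only [Function.comp_def, neg_neg, ← gaussQ_eq_setIntegral_gaussianPDFReal]
    using key.comp tendsto_neg_atBot_atTop

@[fun_prop]
lemma continuous_eta : Continuous eta := Real.continuous_negMulLog

lemma eta_mul (x y : ℝ) : eta (x * y) = x * eta y + y * eta x := by
  rw [add_comm]
  exact Real.negMulLog_mul x y

@[simp]
lemma eta_zero : eta 0 = 0 := Real.negMulLog_zero

@[simp]
lemma eta_one : eta 1 = 0 := Real.negMulLog_one

section Quantizer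

variable {α : Type*} {l : Filter α} {t : α → ℝ} {k : ℕ} {q : ℕ → ℝ}

lemma tendsto_Qb_atTop (hk : k ≠ 0) (ht : Tendsto t l atTop) (m : ℕ) :
    Tendsto (fun b => Qb k q (t b) m) l (nhds (if m = k then 0 else 1)) := by
  unfold Qb
  split_ifs with h0 hm
  · omega
  · exact tendsto_const_nhds
  · exact tendsto_const_nhds
  · refine tendsto_gaussQ_atBot.comp ?_
    simpa only [sub_eq_add_neg, Function.comp_def]
      using tendsto_atBot_add_const_left l (q m) (tendsto_neg_atTop_atBot.comp ht)

lemma tendsto_adcP_atTop (hk : k ≠ 0) (ht : Tendsto t l atTop) {m : ℕ} (hm : m ≤ k) :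
    Tendsto (fun b => adcP k q (t b) m) l (nhds (if m = k then 1 else 0)) := by
  show Tendsto (fun b => Qb k q (t b) (m - 1) - Qb k q (t b) m) l _
  convert (tendsto_Qb_atTop hk ht (m - 1)).sub (tendsto_Qb_atTop hk ht m) using 2
  split_ifs <;> first | omega | norm_num

lemma sum_adcP (hk : k ≠ 0) (x : ℝ) : ∑ m ∈ Icc 1 k, adcP k q x m = 1 := by
  rw [← Ico_add_one_right_eq_Icc, sum_Ico_eq_sum_range, Nat.add_sub_cancel]
  simp only [adcP, add_comm 1, Nat.add_sub_cancel]
  rw [sum_range_sub' (Qb k q x)]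
  simp [Qb, hk]

end Quantizer

section BinaryMI

variable {ι : Type*} (S : Finset ι) (φ : ℝ)

noncomputable def binaryMI (P₁ P₂ : ι → ℝ) : ℝ :=
  ∑ y ∈ S, (eta (φ * P₁ y + (1 - φ) * P₂ y) - φ * eta (P₁ y) - (1 - φ) * eta (P₂ y))

lemma binaryMI_ite_eq_fphi [DecidableEq ι] {y₀ : ι} (hy₀ : y₀ ∈ S) {P : ι → ℝ}
    (hP : ∑ y ∈ S, P y = 1) :
    binaryMI S φ P (fun y => if y = y₀ then 1 else 0) = fphi φ (P y₀) := by
  have hoff : ∀ y ∈ S.erase y₀, eta (φ * P y + (1 - φ) * (if y = y₀ then 1 else 0))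
      - φ * eta (P y) - (1 - φ) * eta (if y = y₀ then 1 else 0) = P y * eta φ := by
    intro y hy
    simp only [if_neg (ne_of_mem_erase hy), mul_zero, add_zero, eta_zero, eta_mul]
    ring
  rw [binaryMI, ← add_sum_erase S _ hy₀, sum_congr rfl hoff, ← sum_mul, sum_erase_eq_sub hy₀,
    hP]
  simp only [↓reduceIte, mul_one, eta_one, fphi, binEnt, eta_mul,
    show 1 - φ * (1 - P y₀) = φ * P y₀ + (1 - φ) by ring]
  ring

lemma tendsto_binaryMI {α : Type*} {l : Filter α} (P₁ : ι → ℝ) {P₂ : α → ι → ℝ}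
    {Q : ι → ℝ} (h : ∀ y ∈ S, Tendsto (fun b => P₂ b y) l (nhds (Q y))) :
    Tendsto (fun b => binaryMI S φ P₁ (P₂ b)) l (nhds (binaryMI S φ P₁ Q)) :=
  tendsto_finsetSum S fun y hy =>
    ((by fun_prop : Continuous fun p => eta (φ * P₁ y + (1 - φ) * p) - φ * eta (P₁ y)
      - (1 - φ) * eta p).tendsto _).comp (h y hy)

end BinaryMI

section Receiver

variable (w : ℂ) (kR kI : ℕ) (qR qI : ℕ → ℝ)

lemma miADCC_eq_binaryMI (φ : ℝ) (x₁ x₂ : ℂ) :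
    miADCC w kR kI qR qI φ x₁ x₂ = binaryMI (Icc 1 kR ×ˢ Icc 1 kI) φ
      (pADCC w kR kI qR qI x₁) (pADCC w kR kI qR qI x₂) := rfl

lemma sum_pADCC (hkR : kR ≠ 0) (hkI : kI ≠ 0) (x : ℂ) :
    ∑ y ∈ Icc 1 kR ×ˢ Icc 1 kI, pADCC w kR kI qR qI x y = 1 := by
  simp only [sum_product, pADCC]
  rw [← sum_mul_sum, sum_adcP hkR, sum_adcP hkI, one_mul]

lemma pADCC_top (hkR : 2 ≤ kR) (hkI : 2 ≤ kI) (x : ℂ) :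
    pADCC w kR kI qR qI x (kR, kI)
      = gaussQ (qR (kR - 1) - (w * x).re) * gaussQ (qI (kI - 1) - (w * x).im) := by
  simp [pADCC, adcP, Qb, show kR ≠ 0 by omega, show kI ≠ 0 by omega,
    show kR - 1 ≠ 0 by omega, show kI - 1 ≠ 0 by omega,
    show kR - 1 ≠ kR by omega, show kI - 1 ≠ kI by omega]

lemma tendsto_pADCC_atTop (hkR : kR ≠ 0) (hkI : kI ≠ 0) {α : Type*} {l : Filter α}
    {x : α → ℂ} (hre : Tendsto (fun b => (w * x b).re) l atTop)
    (him : Tendsto (fun b => (w * x b).im) l atTop) {y : ℕ × ℕ}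
    (hy : y ∈ Icc 1 kR ×ˢ Icc 1 kI) :
    Tendsto (fun b => pADCC w kR kI qR qI (x b) y) l
      (nhds (if y = (kR, kI) then 1 else 0)) := by
  obtain ⟨hy₁, hy₂⟩ := mem_product.1 hy
  simp only [pADCC]
  convert (tendsto_adcP_atTop (q := qR) hkR hre (mem_Icc.1 hy₁).2).mul
    (tendsto_adcP_atTop (q := qI) hkI him (mem_Icc.1 hy₂).2) using 2
  simp only [ite_zero_mul_ite_zero, one_mul, Prod.ext_iff]

end Receiver

section Rotation

variable (w : ℂ)

lemma mul_ofReal_mul_exp_rotate (θ b : ℝ) :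
    w * ((b : ℂ) * Complex.exp (((θ - Complex.arg w : ℝ) : ℂ) * Complex.I))
      = ((‖w‖ * b : ℝ) : ℂ) * Complex.exp ((θ : ℂ) * Complex.I) := by
  nth_rewrite 1 [← Complex.norm_mul_exp_arg_mul_I w]
  rw [show ∀ u v : ℂ, (‖w‖ : ℂ) * u * (b * v) = ((‖w‖ * b : ℝ) : ℂ) * (u * v) by
    intro u v; push_cast; ring, ← Complex.exp_add]
  congr 2
  push_cast
  ring

lemma re_mul_ofReal_mul_exp_rotate (θ b : ℝ) :
    (w * ((b : ℂ) * Complex.exp (((θ - Complex.arg w : ℝ) : ℂ) * Complex.I))).re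
      = ‖w‖ * b * Real.cos θ := by
  rw [mul_ofReal_mul_exp_rotate, Complex.re_ofReal_mul, Complex.exp_ofReal_mul_I_re]

lemma im_mul_ofReal_mul_exp_rotate (θ b : ℝ) :
    (w * ((b : ℂ) * Complex.exp (((θ - Complex.arg w : ℝ) : ℂ) * Complex.I))).im
      = ‖w‖ * b * Real.sin θ := by
  rw [mul_ofReal_mul_exp_rotate, Complex.im_ofReal_mul, Complex.exp_ofReal_mul_I_im]

variable {w} {θ : ℝ}

lemma tendsto_re_mul_ofReal_mul_exp_rotate (hw : w ≠ 0) (hθ : 0 < Real.cos θ) :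
    Tendsto (fun b : ℝ =>
      (w * ((b : ℂ) * Complex.exp (((θ - Complex.arg w : ℝ) : ℂ) * Complex.I))).re)
      atTop atTop := by
  simpa only [re_mul_ofReal_mul_exp_rotate, id_eq]
    using (tendsto_id.const_mul_atTop (norm_pos_iff.2 hw)).atTop_mul_const hθ

lemma tendsto_im_mul_ofReal_mul_exp_rotate (hw : w ≠ 0) (hθ : 0 < Real.sin θ) :
    Tendsto (fun b : ℝ =>
      (w * ((b : ℂ) * Complex.exp (((θ - Complex.arg w : ℝ) : ℂ) * Complex.I))).im)
      atTop atTop := by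
  simpa only [im_mul_ofReal_mul_exp_rotate, id_eq]
    using (tendsto_id.const_mul_atTop (norm_pos_iff.2 hw)).atTop_mul_const hθ

end Rotation

theorem miADCC_tendsto_general (w₂ : ℂ) (hw₂ : w₂ ≠ 0) (θ : ℝ)
    (hθ : θ ∈ Set.Ioo (0 : ℝ) (π / 2)) (a φ : ℝ)
    (kR kI : ℕ) (hkR : 2 ≤ kR) (hkI : 2 ≤ kI) (qR qI : ℕ → ℝ) :
    Tendsto
      (fun b : ℝ => miADCC w₂ kR kI qR qI φ
        ((a : ℂ) * Complex.exp (((θ - Complex.arg w₂ : ℝ) : ℂ) * Complex.I))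
        ((b : ℂ) * Complex.exp (((θ - Complex.arg w₂ : ℝ) : ℂ) * Complex.I)))
      atTop
      (nhds (fphi φ
        (gaussQ (qR (kR - 1) - ‖w₂‖ * a * Real.cos θ)
          * gaussQ (qI (kI - 1) - ‖w₂‖ * a * Real.sin θ)))) := by
  have hcos : 0 < Real.cos θ :=
    Real.cos_pos_of_mem_Ioo ⟨by linarith [hθ.1, Real.pi_pos], hθ.2⟩
  have hsin : 0 < Real.sin θ :=
    Real.sin_pos_of_pos_of_lt_pi hθ.1 (by linarith [hθ.2, Real.pi_pos])
  have hkR₀ : kR ≠ 0 := by omega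
  have hkI₀ : kI ≠ 0 := by omega
  have htop : (kR, kI) ∈ Icc 1 kR ×ˢ Icc 1 kI := by
    simp only [mem_product, mem_Icc]
    omega
  simp only [miADCC_eq_binaryMI]
  convert tendsto_binaryMI _ φ _ fun y hy => tendsto_pADCC_atTop w₂ kR kI qR qI hkR₀ hkI₀
    (tendsto_re_mul_ofReal_mul_exp_rotate hw₂ hcos)
    (tendsto_im_mul_ofReal_mul_exp_rotate hw₂ hsin) hy using 2
  rw [binaryMI_ite_eq_fphi _ _ htop (sum_pADCC w₂ kR kI qR qI hkR₀ hkI₀ _),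
    pADCC_top w₂ kR kI qR qI hkR hkI, re_mul_ofReal_mul_exp_rotate,
    im_mul_ofReal_mul_exp_rotate]

/-- With `θ ∈ (0, π/2)`, `Φ = θ - arg w₂`, and inputs `x₁ = a·e^{iΦ}` (w.p. `φ`) and
`x₂ = b·e^{iΦ}` (w.p. `1-φ`), the binary-input mutual information `I₂(b)` of the
`(k_R,k_I)`-point receiver with gain `w₂` converges, as `b → ∞`, to `f_φ(p₂)` where
`p₂ = Q(q_{R,k_R-1} - |w₂|·a·cos θ)·Q(q_{I,k_I-1} - |w₂|·a·sin θ)`. -/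
theorem miADCC_tendsto (w₂ : ℂ) (hw₂ : w₂ ≠ 0) (θ : ℝ)
    (hθ : θ ∈ Set.Ioo (0 : ℝ) (π / 2)) (a φ : ℝ) (hφ : φ ∈ Set.Ioo (0 : ℝ) 1)
    (kR kI : ℕ) (hkR : 2 ≤ kR) (hkI : 2 ≤ kI) (qR qI : ℕ → ℝ)
    (hqR : ∀ l : ℕ, 1 ≤ l → l + 1 ≤ kR - 1 → qR l < qR (l + 1))
    (hqI : ∀ l : ℕ, 1 ≤ l → l + 1 ≤ kI - 1 → qI l < qI (l + 1)) :
    Tendsto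
      (fun b : ℝ => miADCC w₂ kR kI qR qI φ
        ((a : ℂ) * Complex.exp (((θ - Complex.arg w₂ : ℝ) : ℂ) * Complex.I))
        ((b : ℂ) * Complex.exp (((θ - Complex.arg w₂ : ℝ) : ℂ) * Complex.I)))
      atTop
      (nhds (fphi φ
        (gaussQ (qR (kR - 1) - ‖w₂‖ * a * Real.cos θ)
          * gaussQ (qI (kI - 1) - ‖w₂‖ * a * Real.sin θ)))) :=
  miADCC_tendsto_general w₂ hw₂ θ hθ a φ kR kI hkR hkI qR qI
end

section
/- Let w₁, w₂ be nonzero reals with |w₁| > |w₂| and let J > 0. Suppose μ* is a Borel probability measure on ℝ with ∫ x² dμ*(x) ≤ J such that R_s(μ*) ≥ R_s(μ) for every Borel probability measure μ on ℝ with ∫ x² dμ(x) ≤ J. Then μ*((−∞,0]) > 0 and μ*([0,∞)) > 0, i.e. the support of μ* is contained neither in (0,∞) nor in (−∞,0). (Theorem 2, case |w₁| > |w₂|.) -/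
/-! Symmetrizing an input law `μ` to `(μ + μ.map (-·)) / 2` keeps the power `∫ x²` and every
conditional-entropy term `∫ h(Q(w x))`, because `h(Q(-y)) = h(1 - Q(y)) = h(Q(y))`, while it moves
every output probability `∫ Q(w x)` to `1/2`. So `R_s` gains `h(p₂) - h(p₁)` with
`pᵢ = ∫ Q(|wᵢ| x) dμ`. If `μ` lives on `(0, ∞)`, then `Q` decreasing gives `p₁ < p₂ ≤ 1/2`, and
`h` is strictly increasing on `[0, 1/2]`, so the symmetrized law is strictly better and `μ` is not
optimal. Reflecting `x ↦ -x` handles `(-∞, 0)`. -/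

open MeasureTheory Real Filter

/-- `I(μ, w) = h(∫ Q(w·x) dμ) - ∫ h(Q(w·x)) dμ`, the mutual information of the real
Gaussian channel `Y = sgn(w·X + N)`, `N ~ N(0,1)`, with a one-bit ADC and input `X ~ μ`. -/
noncomputable def miMeas (μ : Measure ℝ) (w : ℝ) : ℝ :=
  binEnt (∫ x, gaussQ (w * x) ∂μ) - ∫ x, binEnt (gaussQ (w * x)) ∂μ

/-- The Wyner secrecy rate `R_s(μ) = I(μ, w₁) - I(μ, w₂)`. -/
noncomputable def wynerRs (w₁ w₂ : ℝ) (μ : Measure ℝ) : ℝ := miMeas μ w₁ - miMeas μ w₂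

open ProbabilityTheory
open scoped ENNReal

lemma gaussQ_eq_measureReal (x : ℝ) : gaussQ x = (gaussianReal 0 1).real (Set.Ioi x) := by
  rw [measureReal_def, gaussianReal_apply_eq_integral _ one_ne_zero, ENNReal.toReal_ofReal
    (setIntegral_nonneg measurableSet_Ioi fun _ _ ↦ gaussianPDFReal_nonneg _ _ _)]
  simp [gaussQ, gaussianPDFReal_def]

lemma gaussQ_nonneg (x : ℝ) : 0 ≤ gaussQ x :=
  gaussQ_eq_measureReal x ▸ measureReal_nonneg

lemma gaussQ_le_one (x : ℝ) : gaussQ x ≤ 1 :=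
  gaussQ_eq_measureReal x ▸ measureReal_le_one

lemma gaussQ_neg (x : ℝ) : gaussQ (-x) = 1 - gaussQ x := by
  have := nullSingletonClass_gaussianReal (μ := 0) one_ne_zero
  have hmap : (gaussianReal 0 1).real (Set.Ioi (-x)) = (gaussianReal 0 1).real (Set.Iio x) := by
    conv_rhs => rw [← neg_zero, ← gaussianReal_map_neg]
    rw [map_measureReal_apply measurable_neg measurableSet_Iio, Set.neg_preimage, Set.neg_Iio]
  rw [gaussQ_eq_measureReal, gaussQ_eq_measureReal, hmap, measureReal_congr Iio_ae_eq_Iic,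
    ← Set.compl_Ioi, measureReal_compl measurableSet_Ioi, probReal_univ]

lemma gaussQ_zero : gaussQ 0 = 2⁻¹ := by
  have := gaussQ_neg 0
  rw [neg_zero] at this
  linarith

lemma gaussQ_strictAnti : StrictAnti gaussQ := by
  intro x y hxy
  have hIoc : (gaussianReal 0 1) (Set.Ioc x y) ≠ 0 := fun h ↦
    hxy.not_ge (by simpa using gaussianReal_absolutelyContinuous' 0 one_ne_zero h)
  rw [gaussQ_eq_measureReal, gaussQ_eq_measureReal, ← Set.Ioc_union_Ioi_eq_Ioi hxy.le,
    measureReal_union Set.Ioc_disjoint_Ioi_same measurableSet_Ioi, lt_add_iff_pos_left]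
  exact ENNReal.toReal_pos hIoc (measure_ne_top _ _)

lemma measurable_gaussQ : Measurable gaussQ := gaussQ_strictAnti.antitone.measurable

lemma binEnt_eq_binEntropy : binEnt = binEntropy := by
  ext p
  simp [binEnt, eta, binEntropy_eq_negMulLog_add_negMulLog_one_sub, negMulLog]

section Symmetrize

noncomputable def MeasureTheory.Measure.symmetrize {α : Type*} [MeasurableSpace α] [Neg α]
    (μ : Measure α) : Measure α :=
  (2⁻¹ : ℝ≥0∞) • (μ + μ.map Neg.neg)

variable {α E : Type*} [MeasurableSpace α] [InvolutiveNeg α] [MeasurableNeg α]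
  [NormedAddCommGroup E] {μ : Measure α} {f : α → E}

lemma integral_map_neg [NormedSpace ℝ E] (μ : Measure α) (f : α → E) :
    ∫ x, f x ∂μ.map Neg.neg = ∫ x, f (-x) ∂μ :=
  integral_map_equiv (MeasurableEquiv.neg α) f

lemma integrable_map_neg_iff : Integrable f (μ.map Neg.neg) ↔ Integrable (fun x ↦ f (-x)) μ :=
  integrable_map_equiv (MeasurableEquiv.neg α) f

instance [IsProbabilityMeasure μ] : IsProbabilityMeasure μ.symmetrize := by
  have := Measure.isProbabilityMeasure_map (μ := μ) measurable_neg.aemeasurable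
  constructor
  simp [Measure.symmetrize, ENNReal.inv_two_add_inv_two]

lemma MeasureTheory.Integrable.symmetrize (hf : Integrable f μ)
    (hf' : Integrable (fun x ↦ f (-x)) μ) :
    Integrable f μ.symmetrize :=
  (hf.add_measure (integrable_map_neg_iff.2 hf')).smul_measure (ENNReal.inv_ne_top.2 two_ne_zero)

lemma integral_symmetrize [NormedSpace ℝ E] (hf : Integrable f μ)
    (hf' : Integrable (fun x ↦ f (-x)) μ) :
    ∫ x, f x ∂μ.symmetrize = ∫ x, (2⁻¹ : ℝ) • (f x + f (-x)) ∂μ := by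
  rw [Measure.symmetrize, integral_smul_measure, integral_add_measure hf
    (integrable_map_neg_iff.2 hf'), integral_map_neg, integral_smul, integral_add hf hf']
  simp

lemma integral_symmetrize_of_even [NormedSpace ℝ E] (hf : Integrable f μ)
    (heven : ∀ x, f (-x) = f x) :
    ∫ x, f x ∂μ.symmetrize = ∫ x, f x ∂μ := by
  rw [integral_symmetrize hf (by simpa only [heven] using hf)]
  simp only [heven, ← two_smul ℝ (f _), smul_smul]
  norm_num

end Symmetrize

lemma integral_lt_integral_of_ae_lt {α : Type*} [MeasurableSpace α] {μ : Measure α} [NeZero μ]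
    {f g : α → ℝ} (hf : Integrable f μ) (hg : Integrable g μ) (hlt : ∀ᵐ x ∂μ, f x < g x) :
    ∫ x, f x ∂μ < ∫ x, g x ∂μ := by
  rw [← sub_pos, ← integral_sub hg hf, integral_pos_iff_support_of_nonneg_ae
    (hlt.mono fun x hx ↦ (sub_pos.2 hx).le) (hg.sub hf), pos_iff_ne_zero]
  intro h0
  obtain ⟨x, hx, hx0⟩ := (hlt.and (measure_eq_zero_iff_ae_notMem.1 h0)).exists
  exact hx0 (sub_pos.2 hx).ne'

section Channel

variable (μ : Measure ℝ) (w : ℝ)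

lemma integrable_gaussQ_mul [IsFiniteMeasure μ] : Integrable (fun x ↦ gaussQ (w * x)) μ :=
  .of_bound (measurable_gaussQ.comp (measurable_const_mul w)).aestronglyMeasurable 1
    (ae_of_all _ fun x ↦ by rw [norm_of_nonneg (gaussQ_nonneg _)]; exact gaussQ_le_one _)

lemma integrable_binEntropy_gaussQ_mul [IsFiniteMeasure μ] :
    Integrable (fun x ↦ binEntropy (gaussQ (w * x))) μ :=
  .of_bound (binEntropy_continuous.measurable.comp
      (measurable_gaussQ.comp (measurable_const_mul w))).aestronglyMeasurable (log 2)
    (ae_of_all _ fun x ↦ by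
      rw [norm_of_nonneg (binEntropy_nonneg (gaussQ_nonneg _) (gaussQ_le_one _))]
      exact binEntropy_le_log_two)

lemma binEntropy_gaussQ_neg (x : ℝ) : binEntropy (gaussQ (-x)) = binEntropy (gaussQ x) := by
  rw [gaussQ_neg, binEntropy_one_sub]

lemma miMeas_eq_binEntropy : miMeas μ w =
    binEntropy (∫ x, gaussQ (w * x) ∂μ) - ∫ x, binEntropy (gaussQ (w * x)) ∂μ := by
  simp only [miMeas, binEnt_eq_binEntropy]

lemma miMeas_neg [IsProbabilityMeasure μ] : miMeas μ (-w) = miMeas μ w := by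
  have hQ : ∫ x, gaussQ (-w * x) ∂μ = 1 - ∫ x, gaussQ (w * x) ∂μ := by
    simp_rw [neg_mul, gaussQ_neg]
    rw [integral_sub (integrable_const 1) (integrable_gaussQ_mul μ w)]
    simp
  simp_rw [miMeas_eq_binEntropy, hQ, binEntropy_one_sub, neg_mul, binEntropy_gaussQ_neg]

lemma miMeas_abs [IsProbabilityMeasure μ] : miMeas μ |w| = miMeas μ w := by
  rcases abs_choice w with h | h <;> simp only [h, miMeas_neg]

lemma miMeas_map_neg [IsProbabilityMeasure μ] : miMeas (μ.map Neg.neg) w = miMeas μ w := by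
  have := Measure.isProbabilityMeasure_map (μ := μ) measurable_neg.aemeasurable
  rw [← miMeas_neg]
  simp [miMeas_eq_binEntropy, integral_map_neg]

lemma miMeas_symmetrize [IsProbabilityMeasure μ] :
    miMeas μ.symmetrize w = binEntropy 2⁻¹ - ∫ x, binEntropy (gaussQ (w * x)) ∂μ := by
  have hQ : ∫ x, gaussQ (w * x) ∂μ.symmetrize = 2⁻¹ := by
    rw [integral_symmetrize (integrable_gaussQ_mul μ w)
      (by simpa using integrable_gaussQ_mul μ (-w))]
    simp [gaussQ_neg]
  rw [miMeas_eq_binEntropy, hQ, integral_symmetrize_of_even (integrable_binEntropy_gaussQ_mul μ w)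
    fun x ↦ by rw [mul_neg, binEntropy_gaussQ_neg]]

variable {μ}

lemma integral_gaussQ_mul_lt [IsProbabilityMeasure μ] (hpos : ∀ᵐ x ∂μ, 0 < x) {v₁ v₂ : ℝ}
    (hv : v₂ < v₁) : ∫ x, gaussQ (v₁ * x) ∂μ < ∫ x, gaussQ (v₂ * x) ∂μ :=
  integral_lt_integral_of_ae_lt (integrable_gaussQ_mul μ v₁) (integrable_gaussQ_mul μ v₂)
    (hpos.mono fun _ hx ↦ gaussQ_strictAnti (mul_lt_mul_of_pos_right hv hx))

lemma integral_gaussQ_mul_le_half [IsProbabilityMeasure μ] (hnonneg : ∀ᵐ x ∂μ, 0 ≤ x)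
    {v : ℝ} (hv : 0 ≤ v) : ∫ x, gaussQ (v * x) ∂μ ≤ 2⁻¹ := by
  calc ∫ x, gaussQ (v * x) ∂μ ≤ ∫ _, (2⁻¹ : ℝ) ∂μ :=
        integral_mono_ae (integrable_gaussQ_mul μ v) (integrable_const _)
          (hnonneg.mono fun _ hx ↦ gaussQ_zero ▸ gaussQ_strictAnti.antitone (mul_nonneg hv hx))
    _ = 2⁻¹ := by simp

end Channel

section Secrecy

variable (w₁ w₂ : ℝ) (μ : Measure ℝ) [IsProbabilityMeasure μ]

lemma wynerRs_abs : wynerRs |w₁| |w₂| μ = wynerRs w₁ w₂ μ := by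
  simp only [wynerRs, miMeas_abs]

lemma wynerRs_map_neg : wynerRs w₁ w₂ (μ.map Neg.neg) = wynerRs w₁ w₂ μ := by
  simp only [wynerRs, miMeas_map_neg]

variable {w₁ w₂ μ}

lemma wynerRs_lt_wynerRs_symmetrize (hgt : |w₂| < |w₁|) (hμ : μ (Set.Iic 0) = 0) :
    wynerRs w₁ w₂ μ < wynerRs w₁ w₂ μ.symmetrize := by
  have hpos : ∀ᵐ x ∂μ, 0 < x := by
    rw [ae_iff]
    simp_rw [not_lt]
    exact hμ
  have h12 := integral_gaussQ_mul_lt hpos hgt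
  have h2 := integral_gaussQ_mul_le_half (hpos.mono fun _ ↦ le_of_lt) (abs_nonneg w₂)
  have h1 : 0 ≤ ∫ x, gaussQ (|w₁| * x) ∂μ := integral_nonneg fun _ ↦ gaussQ_nonneg _
  have hh := binEntropy_strictMonoOn ⟨h1, h12.le.trans h2⟩ ⟨h1.trans h12.le, h2⟩ h12
  rw [← wynerRs_abs, ← wynerRs_abs w₁]
  simp only [wynerRs, miMeas_symmetrize, miMeas_eq_binEntropy μ]
  linarith

end Secrecy

theorem optimal_support_gt_general (w₁ w₂ : ℝ)
    (hgt : |w₂| < |w₁|) (J : ℝ)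
    (μs : Measure ℝ) [IsProbabilityMeasure μs]
    (hint : Integrable (fun x : ℝ => x ^ 2) μs)
    (hpow : (∫ x, x ^ 2 ∂μs) ≤ J)
    (hopt : ∀ μ : Measure ℝ, IsProbabilityMeasure μ →
      Integrable (fun x : ℝ => x ^ 2) μ → (∫ x, x ^ 2 ∂μ) ≤ J →
      wynerRs w₁ w₂ μ ≤ wynerRs w₁ w₂ μs) :
    0 < μs (Set.Iic 0) ∧ 0 < μs (Set.Ici 0) := by
  have hsym : ∀ (ν : Measure ℝ) [IsProbabilityMeasure ν], Integrable (fun x : ℝ => x ^ 2) ν →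
      ∫ x, x ^ 2 ∂ν = ∫ x, x ^ 2 ∂μs → wynerRs w₁ w₂ ν.symmetrize ≤ wynerRs w₁ w₂ μs :=
    fun ν _ hν hνpow ↦ hopt _ inferInstance (hν.symmetrize (by simpa using hν))
      (by rw [integral_symmetrize_of_even hν (by simp), hνpow]; exact hpow)
  have := Measure.isProbabilityMeasure_map (μ := μs) measurable_neg.aemeasurable
  constructor
  · exact pos_iff_ne_zero.2 fun h ↦
      (wynerRs_lt_wynerRs_symmetrize hgt h).not_ge (hsym μs hint rfl)
  · have hreflect :
        wynerRs w₁ w₂ (μs.map Neg.neg).symmetrize ≤ wynerRs w₁ w₂ (μs.map Neg.neg) := by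
      rw [wynerRs_map_neg]
      exact hsym _ (integrable_map_neg_iff.2 (by simpa using hint)) (by simp [integral_map_neg])
    have h := pos_iff_ne_zero.2 fun h ↦ (wynerRs_lt_wynerRs_symmetrize hgt h).not_ge hreflect
    rwa [Measure.map_apply measurable_neg measurableSet_Iic, Set.neg_preimage, Set.neg_Iic,
      neg_zero] at h

/-- Theorem 2, case `|w₁| > |w₂|`: any maximizer `μ*` of the Wyner secrecy rate under
the power constraint `∫ x² dμ ≤ J` assigns positive mass to both `(-∞,0]` and `[0,∞)`,
i.e. its support is contained neither in `(0,∞)` nor in `(-∞,0)`. -/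
theorem optimal_support_gt (w₁ w₂ : ℝ) (hw₁ : w₁ ≠ 0) (hw₂ : w₂ ≠ 0)
    (hgt : |w₂| < |w₁|) (J : ℝ) (hJ : 0 < J)
    (μs : Measure ℝ) [IsProbabilityMeasure μs]
    (hint : Integrable (fun x : ℝ => x ^ 2) μs)
    (hpow : (∫ x, x ^ 2 ∂μs) ≤ J)
    (hopt : ∀ μ : Measure ℝ, IsProbabilityMeasure μ →
      Integrable (fun x : ℝ => x ^ 2) μ → (∫ x, x ^ 2 ∂μ) ≤ J →
      wynerRs w₁ w₂ μ ≤ wynerRs w₁ w₂ μs) :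
    0 < μs (Set.Iic 0) ∧ 0 < μs (Set.Ici 0) :=
  optimal_support_gt_general w₁ w₂ hgt J μs hint hpow hopt
end
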